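/- arXiv:1403.6386 — 5 statements merged into one kernel-verified Lean document; each statement's English description precedes it below -/
import Mathlib

section
/- For any graph G on n vertices and any integer k, if k ≥ χ_g(G)+1 (one more than the grundy number of G), then G is k-mixing and the diameter of the k-recoloring graph R_k(G) is at most 4·χ(G)·n. -/
open SimpleGraph

/-- A proper `k`-coloring of a graph. -/
def Proper {V : Type} (G : SimpleGraph V) {k : ℕ} (c : V → Fin k) : Prop :=
  ∀ ⦃x y⦄, G.Adj x y → c x ≠ c y

/-- The `k`-recoloring graph of `G`: vertices are the proper `k`-colorings of `G`,
two colorings being adjacent when they differ on exactly one vertex. -/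
def recolorGraph {V : Type} (G : SimpleGraph V) (k : ℕ) :
    SimpleGraph {c : V → Fin k // Proper G c} where
  Adj c d := ∃! v, c.1 v ≠ d.1 v
  symm := by
    constructor
    rintro c d ⟨v, hv, hu⟩
    exact ⟨v, hv.symm, fun w hw => hu w hw.symm⟩
  loopless := by
    constructor
    rintro c ⟨v, hv, -⟩
    exact hv rfl

/-- `c` is a greedy (grundy) coloring of `G` relative to some vertex order:
equivalently, it is proper and every vertex sees every smaller color in its
neighborhood. -/
def IsGrundy {V : Type} (G : SimpleGraph V) (c : V → ℕ) : Prop :=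
  (∀ ⦃x y⦄, G.Adj x y → c x ≠ c y) ∧ ∀ v, ∀ j < c v, ∃ u, G.Adj v u ∧ c u = j

/-- The grundy number of `G`: the largest number of colors of a greedy coloring. -/
noncomputable def grundyNum {V : Type} [Fintype V] (G : SimpleGraph V) : ℕ :=
  sSup {ℓ | ∃ c : V → ℕ, IsGrundy G c ∧ (Finset.univ.image c).card = ℓ}

/-- A tree decomposition of the graph `G`, with nodes indexed by `ι`. -/
structure TreeDecomp {V : Type} (G : SimpleGraph V) (ι : Type) where
  T : SimpleGraph ι
  isTree : T.IsTree
  bag : ι → Finset V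
  mem_bag : ∀ x : V, ∃ u, x ∈ bag u
  edge_bag : ∀ ⦃x y⦄, G.Adj x y → ∃ u, x ∈ bag u ∧ y ∈ bag u
  support_connected : ∀ x : V, (T.induce {u | x ∈ bag u}).Connected

/-- The treewidth of a finite graph: the least `w` such that some tree decomposition
has all bags of size at most `w + 1`. -/
noncomputable def treewidth {V : Type} [Fintype V] (G : SimpleGraph V) : ℕ :=
  sInf {w | ∃ (m : ℕ) (td : TreeDecomp G (Fin m)), ∀ u, (td.bag u).card ≤ w + 1}

/-- An `ℓ`-complete tree decomposition: every bag has size `ℓ+1` and adjacent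
bags intersect on `ℓ` vertices. -/
def TreeDecomp.IsComplete {V ι : Type} [DecidableEq V] {G : SimpleGraph V}
    (td : TreeDecomp G ι) (ℓ : ℕ) : Prop :=
  (∀ u, (td.bag u).card = ℓ + 1) ∧
  ∀ ⦃u v⦄, td.T.Adj u v → (td.bag u ∩ td.bag v).card = ℓ

/-- `x` and `y` are `T`-parents: for some adjacent nodes `u, v`,
`x = B_u ∖ B_v` and `y = B_v ∖ B_u`. -/
def TreeDecomp.Parent {V ι : Type} [DecidableEq V] {G : SimpleGraph V}
    (td : TreeDecomp G ι) (x y : V) : Prop :=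
  ∃ u v, td.T.Adj u v ∧ td.bag u \ td.bag v = {x} ∧ td.bag v \ td.bag u = {y}

/-- A coloring is `X`-coherent (relative to a tree decomposition) if parents in `X`
get the same color and every vertex of `X` is the unique vertex of its color in
every bag containing it. -/
def TreeDecomp.Coherent {V ι : Type} [DecidableEq V] {G : SimpleGraph V}
    (td : TreeDecomp G ι) (X : Set V) {k : ℕ} (c : V → Fin k) : Prop :=
  (∀ ⦃x y⦄, x ∈ X → y ∈ X → td.Parent x y → c x = c y) ∧
  ∀ u, ∀ x ∈ X, x ∈ td.bag u → ∀ y ∈ td.bag u, c y = c x → y = x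

/-- The subtree rooted at `v` when `T` is rooted at `u`: the nodes all of whose
walks to the root `u` pass through `v`. -/
def subtreeAt {ι : Type} (T : SimpleGraph ι) (u v : ι) : Set ι :=
  {p | ∀ w : T.Walk p u, v ∈ w.support}

/-- `G` contains an induced path on four vertices. -/
def HasInducedP4 {V : Type} (G : SimpleGraph V) : Prop :=
  ∃ a b c d : V, a ≠ b ∧ a ≠ c ∧ a ≠ d ∧ b ≠ c ∧ b ≠ d ∧ c ≠ d ∧
    G.Adj a b ∧ G.Adj b c ∧ G.Adj c d ∧ ¬G.Adj a c ∧ ¬G.Adj a d ∧ ¬G.Adj b d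

/-- `G` contains an induced path on five vertices. -/
def HasInducedP5 {V : Type} (G : SimpleGraph V) : Prop :=
  ∃ a b c d e : V, a ≠ b ∧ a ≠ c ∧ a ≠ d ∧ a ≠ e ∧ b ≠ c ∧ b ≠ d ∧ b ≠ e ∧
    c ≠ d ∧ c ≠ e ∧ d ≠ e ∧
    G.Adj a b ∧ G.Adj b c ∧ G.Adj c d ∧ G.Adj d e ∧
    ¬G.Adj a c ∧ ¬G.Adj a d ∧ ¬G.Adj a e ∧ ¬G.Adj b d ∧ ¬G.Adj b e ∧ ¬G.Adj c e

/-- A walk is an induced path if it is a path and the only adjacencies among its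
vertices are its own edges. -/
def IsInducedPathW {V : Type} (G : SimpleGraph V) {x y : V} (p : G.Walk x y) : Prop :=
  p.IsPath ∧ ∀ ⦃u v⦄, u ∈ p.support → v ∈ p.support → G.Adj u v → s(u, v) ∈ p.edges

/-- A graph is distance-hereditary if any two induced paths between the same pair of
vertices have the same length. -/
def IsDistanceHereditary {V : Type} (G : SimpleGraph V) : Prop :=
  ∀ (x y : V) (p q : G.Walk x y),
    IsInducedPathW G p → IsInducedPathW G q → p.length = q.length

/-- `X` is a module of `G`: every outside vertex is adjacent to all of `X` or none of it. -/
def IsModule {V : Type} (G : SimpleGraph V) (X : Set V) : Prop :=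
  ∀ y ∉ X, (∀ x ∈ X, G.Adj y x) ∨ ∀ x ∈ X, ¬G.Adj y x

/-- `X` is a strong module of `G`: a module of size at least two which overlaps
no other module. -/
def IsStrongModule {V : Type} (G : SimpleGraph V) (X : Set V) : Prop :=
  IsModule G X ∧ 2 ≤ X.ncard ∧
    ∀ M : Set V, IsModule G M → Disjoint M X ∨ M ⊆ X ∨ X ⊆ M

/-- The setoid identifying all elements of `C`. -/
def mergedSetoid {V : Type} (C : Set V) : Setoid V where
  r x y := x = y ∨ (x ∈ C ∧ y ∈ C)
  iseqv := by
    refine ⟨fun x => Or.inl rfl, ?_, ?_⟩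
    · rintro x y (rfl | ⟨h1, h2⟩)
      · exact Or.inl rfl
      · exact Or.inr ⟨h2, h1⟩
    · rintro x y z (rfl | ⟨h1, h2⟩) (rfl | ⟨h3, h4⟩)
      · exact Or.inl rfl
      · exact Or.inr ⟨h3, h4⟩
      · exact Or.inr ⟨h1, h2⟩
      · exact Or.inr ⟨h1, h4⟩

/-- The merged graph on an independent set `C`: all vertices of `C` are identified
into a single vertex. -/
def mergedGraph {V : Type} (G : SimpleGraph V) (C : Set V)
    (hC : ∀ x ∈ C, ∀ y ∈ C, ¬G.Adj x y) :
    SimpleGraph (Quotient (mergedSetoid C)) where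
  Adj a b := ∃ x y, G.Adj x y ∧ Quotient.mk (mergedSetoid C) x = a ∧
    Quotient.mk (mergedSetoid C) y = b
  symm := by
    constructor
    rintro a b ⟨x, y, hxy, rfl, rfl⟩
    exact ⟨y, x, hxy.symm, rfl, rfl⟩
  loopless := by
    constructor
    rintro a ⟨x, y, hxy, rfl, h⟩
    rcases Quotient.exact h with rfl | ⟨h1, h2⟩
    · exact G.loopless.irrefl _ hxy
    · exact hC x h2 y h1 hxy

/-- `α` can be transformed into `β` by single-vertex recolorings through proper
`k`-colorings of `G`, recoloring each vertex `v` at most `bound v` times. -/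
def RecolorSeqLe {V : Type} (G : SimpleGraph V) {k : ℕ} (α β : V → Fin k)
    (bound : V → ℕ) : Prop :=
  ∃ (m : ℕ) (c : ℕ → V → Fin k),
    c 0 = α ∧ c m = β ∧ (∀ i ≤ m, Proper G (c i)) ∧
    (∀ i < m, ∃! v, c i v ≠ c (i + 1) v) ∧
    ∀ v, ((Finset.range m).filter fun i => c i v ≠ c (i + 1) v).card ≤ bound v

/-- A modular coloring: for every strong module `M` which is the disjoint union of
`p ≥ 2` strong modules `Ms 0, …, Ms (p-1)`, the coloring uses exactly `χ(H[M])`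
colors on `M`, and each `Ms i` receives exactly the first `χ(H[Ms i])` of those colors. -/
def ModularColoring {W : Type} (H : SimpleGraph W) {k : ℕ} (c : W → Fin k) : Prop :=
  ∀ (M : Set W) (p : ℕ) (Ms : Fin p → Set W), 2 ≤ p →
    IsStrongModule H M → (∀ i, IsStrongModule H (Ms i)) →
    (Pairwise fun i j => Disjoint (Ms i) (Ms j)) →
    M = ⋃ i, Ms i →
    (∀ i j, i ≠ j → ∀ x ∈ Ms i, ∀ y ∈ Ms j, ¬H.Adj x y) →
    ((c '' M).ncard : ℕ∞) = (H.induce M).chromaticNumber ∧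
    ∀ i, ((c '' Ms i).ncard : ℕ∞) = (H.induce (Ms i)).chromaticNumber ∧
      ∀ a ∈ c '' Ms i, ∀ b ∈ c '' M, b ≤ a → b ∈ c '' Ms i

/-- A frozen `k`-coloring: a proper coloring in which every vertex sees every other
color in its neighborhood. -/
def Frozen {V : Type} (G : SimpleGraph V) {k : ℕ} (c : V → Fin k) : Prop :=
  Proper G c ∧ ∀ x, ∀ b : Fin k, b ≠ c x → ∃ y, G.Adj x y ∧ c y = b

/-!
Fix a proper coloring `g` with `χ(G)` colors and least color sum; it is greedy. Any
`k`-coloring is turned into `g` in `χ(G)` phases of at most `2n` recolorings each. Phase `i`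
starts from a coloring equal to `g` where `g < i` and with colors `≥ i` elsewhere. It first
recolors the vertices with `g ≥ i` greedily above `i`, in increasing order of color; the result
is a greedy coloring of `G`, so it uses fewer than `χ_g(G) ≤ k - 1` colors. Color `k - 1` is
then free to park the vertices of color `i` outside the class `g = i`, after which that class
is recolored `i`. So every coloring is within `2χ(G)n` of `g`, and any two within `4χ(G)n`.
-/

open SimpleGraph Finset Function

section Grundy

variable {V : Type} {G : SimpleGraph V}

lemma update_ne_of_adj {α : Type*} [DecidableEq V] {f : V → α}
    (hf : ∀ ⦃x y⦄, G.Adj x y → f x ≠ f y) {v : V} {a : α} (ha : ∀ u, G.Adj v u → f u ≠ a) :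
    ∀ ⦃x y⦄, G.Adj x y → update f v a x ≠ update f v a y := by
  intro x y hxy
  rcases eq_or_ne x v with rfl | hx
  · rw [update_self, update_of_ne hxy.ne.symm]
    exact (ha y hxy).symm
  rcases eq_or_ne y v with rfl | hy
  · rw [update_self, update_of_ne hx]
    exact ha x hxy.symm
  rw [update_of_ne hx, update_of_ne hy]
  exact hf hxy

variable [Fintype V]

lemma IsGrundy.lt_card_image {c : V → ℕ} (hc : IsGrundy G c) (v : V) :
    c v < (univ.image c).card := by
  classical
  have hsub : range (c v + 1) ⊆ univ.image c := by
    intro l hl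
    rcases (Nat.lt_succ_iff.1 (mem_range.1 hl)).lt_or_eq with hlt | rfl
    · obtain ⟨u, -, hu⟩ := hc.2 v l hlt
      exact mem_image.2 ⟨u, mem_univ u, hu⟩
    · exact mem_image_of_mem c (mem_univ v)
  simpa using card_le_card hsub

lemma IsGrundy.lt_grundyNum {c : V → ℕ} (hc : IsGrundy G c) (v : V) : c v < grundyNum G :=
  (hc.lt_card_image v).trans_le <| le_csSup
    ⟨Fintype.card V, by rintro _ ⟨c', -, rfl⟩; exact card_image_le⟩ ⟨c, hc, rfl⟩

/-- A proper coloring with colors `< t` minimizing the sum of the colors is greedy: a vertex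
missing a smaller color in its neighborhood could be recolored to it. -/
lemma exists_isGrundy_lt_of_colorable {t : ℕ} (h : G.Colorable t) :
    ∃ g : V → ℕ, IsGrundy G g ∧ ∀ v, g v < t := by
  classical
  obtain ⟨f⟩ := h
  let P : (V → ℕ) → Prop := fun g => (∀ ⦃x y⦄, G.Adj x y → g x ≠ g y) ∧ ∀ v, g v < t
  have hex : ∃ s, ∃ g, P g ∧ ∑ v, g v = s :=
    ⟨_, fun v => f v, ⟨fun x y h e => f.valid h (Fin.ext e), fun v => (f v).2⟩, rfl⟩
  obtain ⟨g, hgP, hgs⟩ := Nat.find_spec hex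
  refine ⟨g, ⟨hgP.1, fun v l hl => ?_⟩, hgP.2⟩
  by_contra! hfree
  have hP : P (update g v l) := ⟨update_ne_of_adj hgP.1 hfree, fun u => by
    rcases eq_or_ne u v with rfl | hu
    · simpa using hl.trans (hgP.2 u)
    · simpa [hu] using hgP.2 u⟩
  have hlt : ∑ u, update g v l u < ∑ u, g u := by
    refine sum_lt_sum (fun u _ => ?_) ⟨v, mem_univ v, by simpa using hl⟩
    rcases eq_or_ne u v with rfl | hu
    · simpa using hl.le
    · simp [hu]
  exact (Nat.find_min' hex ⟨_, hP, rfl⟩).not_gt (hgs ▸ hlt)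

lemma chromaticNumber_le_grundyNum (G : SimpleGraph V) : G.chromaticNumber ≤ grundyNum G := by
  obtain ⟨g, hg, -⟩ := exists_isGrundy_lt_of_colorable G.colorable_of_fintype
  exact ((colorable_iff_exists_bdd_nat_coloring _).2
    ⟨Coloring.mk g fun h => hg.1 h, hg.lt_grundyNum⟩).chromaticNumber_le

end Grundy

section Recoloring

variable {V : Type} {G : SimpleGraph V} {k : ℕ}

lemma exists_least_free_color (c : V → Fin k) (v : V) {lo : ℕ} {b : Fin k} (hlo : lo ≤ b)
    (hb : ∀ u, G.Adj v u → c u ≠ b) :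
    ∃ a : Fin k, lo ≤ a ∧ a ≤ b ∧ (∀ u, G.Adj v u → c u ≠ a) ∧
      ∀ l, lo ≤ l → l < a → ∃ u, G.Adj v u ∧ (c u : ℕ) = l := by
  classical
  have hex : ∃ a : ℕ, lo ≤ a ∧ ∀ u, G.Adj v u → (c u : ℕ) ≠ a :=
    ⟨b, hlo, fun u h e => hb u h (Fin.ext e)⟩
  have hle : Nat.find hex ≤ b := Nat.find_min' hex ⟨hlo, fun u h e => hb u h (Fin.ext e)⟩
  refine ⟨⟨Nat.find hex, by omega⟩, (Nat.find_spec hex).1, hle,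
    fun u h e => (Nat.find_spec hex).2 u h (congrArg Fin.val e), fun l hl hla => ?_⟩
  by_contra! hl'
  exact Nat.find_min hex hla ⟨hl, hl'⟩

variable [DecidableEq V]

lemma Proper.update {c : V → Fin k} (hc : Proper G c) {v : V} {a : Fin k}
    (ha : ∀ u, G.Adj v u → c u ≠ a) : Proper G (update c v a) :=
  update_ne_of_adj hc ha

lemma recolorGraph_edist_update_le_one {c : V → Fin k} (hc : Proper G c) {v : V} {a : Fin k}
    (ha : ∀ u, G.Adj v u → c u ≠ a) :
    (recolorGraph G k).edist ⟨c, hc⟩ ⟨update c v a, hc.update ha⟩ ≤ 1 := by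
  refine edist_le_one_iff_adj_or_eq.2 ?_
  by_cases hav : a = c v
  · exact Or.inr (Subtype.ext (by simp [hav]))
  · refine Or.inl ⟨v, by simpa [eq_comm] using hav, fun w hw => ?_⟩
    by_contra hwv
    exact hw (update_of_ne hwv a c).symm

lemma recolorGraph_edist_piecewise_le {c : V → Fin k} (hc : Proper G c) (S : Finset V) (a : Fin k)
    (hS : ∀ v ∈ S, ∀ u, G.Adj v u → u ∉ S ∧ c u ≠ a) :
    ∃ hc' : Proper G (S.piecewise (fun _ => a) c),
      (recolorGraph G k).edist ⟨c, hc⟩ ⟨_, hc'⟩ ≤ S.card := by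
  induction S using Finset.induction_on with
  | empty => exact ⟨by simpa using hc, by simp⟩
  | insert x S hx ih =>
    obtain ⟨hcS, hdS⟩ := ih fun v hv u huv =>
      ⟨fun hu => (hS v (mem_insert_of_mem hv) u huv).1 (mem_insert_of_mem hu),
        (hS v (mem_insert_of_mem hv) u huv).2⟩
    have hfree : ∀ u, G.Adj x u → S.piecewise (fun _ => a) c u ≠ a := fun u hxu => by
      obtain ⟨hu, hcu⟩ := hS x (mem_insert_self x S) u hxu
      rwa [piecewise_eq_of_notMem _ _ _ fun h => hu (mem_insert_of_mem h)]
    rw [piecewise_insert]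
    refine ⟨hcS.update hfree, ?_⟩
    calc _ ≤ _ + _ := SimpleGraph.edist_triangle
      _ ≤ (S.card : ℕ∞) + 1 := add_le_add hdS (recolorGraph_edist_update_le_one hcS hfree)
      _ = _ := by rw [card_insert_of_notMem hx]; push_cast; rfl

def IsGreedyRecoloring (G : SimpleGraph V) (lo : ℕ) (U : Finset V) (c c' : V → Fin k) : Prop :=
  (∀ v ∉ U, c' v = c v) ∧ (∀ v ∈ U, lo ≤ c' v ∧ (c' v : ℕ) ≤ c v) ∧
    ∀ v ∈ U, ∀ l, lo ≤ l → l < c' v → ∃ u, G.Adj v u ∧ (c' u : ℕ) = l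

/-- Processing a vertex `w` of maximal color after `U`: its color is still free, since the
neighbors processed before it had smaller colors, which can only have decreased. -/
lemma IsGreedyRecoloring.exists_insert {lo : ℕ} {U : Finset V} {c c' : V → Fin k}
    (hc : Proper G c) (h : IsGreedyRecoloring G lo U c c') {w : V} (hw : w ∉ U)
    (hmax : ∀ v ∈ U, (c v : ℕ) ≤ c w) (hwlo : lo ≤ c w) :
    ∃ a : Fin k, (∀ u, G.Adj w u → c' u ≠ a) ∧
      IsGreedyRecoloring G lo (insert w U) c (update c' w a) := by
  obtain ⟨hoff, hbound, hsees⟩ := h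
  have hfree : ∀ u, G.Adj w u → c' u ≠ c w := fun u hwu e => by
    by_cases hu : u ∈ U
    · have := (hbound u hu).2
      have := hmax u hu
      have : (c u : ℕ) ≠ c w := fun h => hc hwu (Fin.ext h).symm
      have : (c' u : ℕ) = c w := congrArg Fin.val e
      omega
    · exact hc hwu (by rw [← hoff u hu, e])
  obtain ⟨a, hloa, haw, hafree, hasees⟩ := exists_least_free_color c' w hwlo hfree
  refine ⟨a, hafree, fun v hv => ?_, fun v hv => ?_, fun v hv l hlo hl => ?_⟩
  · rw [update_of_ne (ne_of_mem_of_not_mem (mem_insert_self w U) hv).symm,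
      hoff v fun h => hv (mem_insert_of_mem h)]
  · rcases mem_insert.1 hv with rfl | hvU
    · simpa using ⟨hloa, haw⟩
    · rw [update_of_ne (ne_of_mem_of_not_mem hvU hw)]
      exact hbound v hvU
  · rcases mem_insert.1 hv with rfl | hvU
    · obtain ⟨u, hvu, hu⟩ := hasees l hlo (by simpa using hl)
      exact ⟨u, hvu, by rwa [update_of_ne hvu.ne.symm]⟩
    · rw [update_of_ne (ne_of_mem_of_not_mem hvU hw)] at hl
      obtain ⟨u, hvu, hu⟩ := hsees v hvU l hlo hl
      have huw : u ≠ w := by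
        rintro rfl
        have := (hbound v hvU).2
        have := hmax v hvU
        rw [hoff u hw] at hu
        omega
      exact ⟨u, hvu, by rwa [update_of_ne huw]⟩

lemma exists_isGreedyRecoloring {c : V → Fin k} (hc : Proper G c) (lo : ℕ) (U : Finset V)
    (hU : ∀ v ∈ U, lo ≤ c v) :
    ∃ (c' : V → Fin k) (hc' : Proper G c'), IsGreedyRecoloring G lo U c c' ∧
      (recolorGraph G k).edist ⟨c, hc⟩ ⟨c', hc'⟩ ≤ U.card := by
  induction U using Finset.induction_on_max_value (fun v => (c v : ℕ)) with
  | empty => exact ⟨c, hc, ⟨fun _ _ => rfl, by simp, by simp⟩, by simp⟩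
  | insert w U hw hmax ih =>
    obtain ⟨c', hc', hgreedy, hdist⟩ := ih fun v hv => hU v (mem_insert_of_mem hv)
    obtain ⟨a, hafree, hgreedy'⟩ :=
      hgreedy.exists_insert hc hw hmax (hU w (mem_insert_self w U))
    refine ⟨_, hc'.update hafree, hgreedy', ?_⟩
    calc _ ≤ _ + _ := SimpleGraph.edist_triangle
      _ ≤ (U.card : ℕ∞) + 1 := add_le_add hdist (recolorGraph_edist_update_le_one hc' hafree)
      _ = _ := by rw [card_insert_of_notMem hw]; push_cast; rfl

end Recoloring

section Phases

variable {V : Type} {G : SimpleGraph V} {k : ℕ}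

/-- `c` coincides with `g` on the vertices with `g v < i`, and uses colors `≥ i` on the others. -/
def AgreeBelow (g : V → ℕ) (i : ℕ) (c : V → Fin k) : Prop :=
  ∀ v, min (c v : ℕ) i = min (g v) i

lemma isGrundy_of_agreeBelow {g : V → ℕ} (hg : IsGrundy G g) {i : ℕ} {c : V → Fin k}
    (hc : Proper G c) (hcg : AgreeBelow g i c)
    (hsees : ∀ v l, i ≤ l → l < c v → ∃ u, G.Adj v u ∧ (c u : ℕ) = l) :
    IsGrundy G fun v => (c v : ℕ) := by
  refine ⟨fun x y h e => hc h (Fin.ext e), fun v l hl => ?_⟩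
  dsimp only at hl ⊢
  rcases le_or_gt i l with hil | hli
  · exact hsees v l hil hl
  · have hv := hcg v
    obtain ⟨u, hvu, hu⟩ := hg.2 v l (by omega)
    have hu' := hcg u
    exact ⟨u, hvu, by omega⟩

variable [Fintype V] [DecidableEq V]

lemma exists_greedy_agreeBelow {g : V → ℕ} (hg : IsGrundy G g) {i : ℕ} {c : V → Fin k}
    (hc : Proper G c) (hcg : AgreeBelow g i c) :
    ∃ (c' : V → Fin k) (hc' : Proper G c'), AgreeBelow g i c' ∧
      (∀ v, (c' v : ℕ) < grundyNum G) ∧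
      (recolorGraph G k).edist ⟨c, hc⟩ ⟨c', hc'⟩ ≤ Fintype.card V := by
  obtain ⟨c', hc', ⟨hoff, hbound, hsees⟩, hdist⟩ :=
    exists_isGreedyRecoloring hc i {v | i ≤ g v} fun v hv => by
      have := hcg v
      simp only [mem_filter, mem_univ, true_and] at hv
      omega
  have hc'g : AgreeBelow g i c' := fun v => by
    by_cases hv : i ≤ g v
    · have := (hbound v (by simpa using hv)).1
      omega
    · rw [hoff v (by simpa using hv)]
      exact hcg v
  refine ⟨c', hc', hc'g, ?_, hdist.trans (by exact_mod_cast card_le_univ _)⟩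
  refine (isGrundy_of_agreeBelow hg hc' hc'g fun v l hil hl => ?_).lt_grundyNum
  by_cases hv : i ≤ g v
  · exact hsees v (by simpa using hv) l hil hl
  · have := hc'g v
    omega

lemma exists_agreeBelow_succ_of_lt_grundyNum {g : V → ℕ} (hg : IsGrundy G g)
    (hk : grundyNum G + 1 ≤ k) {i : ℕ} (hi : i < k) {c : V → Fin k} (hc : Proper G c)
    (hcg : AgreeBelow g i c) (hcΓ : ∀ v, (c v : ℕ) < grundyNum G) :
    ∃ (c' : V → Fin k) (hc' : Proper G c'), AgreeBelow g (i + 1) c' ∧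
      (recolorGraph G k).edist ⟨c, hc⟩ ⟨c', hc'⟩ ≤ Fintype.card V := by
  obtain ⟨top, htop⟩ : ∃ a : Fin k, (a : ℕ) = k - 1 := ⟨⟨k - 1, by omega⟩, rfl⟩
  obtain ⟨ci, hci⟩ : ∃ a : Fin k, (a : ℕ) = i := ⟨⟨i, hi⟩, rfl⟩
  let S : Finset V := {v | i < g v ∧ (c v : ℕ) = i}
  let T : Finset V := {v | g v = i}
  obtain ⟨hc₁, h₁⟩ := recolorGraph_edist_piecewise_le hc S top fun v hv u hvu => by
    simp only [S, mem_filter, mem_univ, true_and] at hv ⊢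
    refine ⟨fun hu => hc hvu (Fin.ext (by omega)), fun e => ?_⟩
    have := hcΓ u
    have := congrArg Fin.val e
    omega
  obtain ⟨hc₂, h₂⟩ := recolorGraph_edist_piecewise_le hc₁ T ci fun v hv u hvu => by
    simp only [T, mem_filter, mem_univ, true_and] at hv ⊢
    refine ⟨fun hu => hg.1 hvu (by omega), fun e => ?_⟩
    have he := congrArg Fin.val e
    have := hcΓ u
    have := hcg u
    have := hg.1 hvu
    simp only [piecewise, S, mem_filter, mem_univ, true_and] at he
    split_ifs at he <;> omega
  refine ⟨_, hc₂, fun v => ?_, ?_⟩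
  · have := hcg v
    have := hcΓ v
    simp only [piecewise, S, T, mem_filter, mem_univ, true_and]
    split_ifs <;> omega
  · have hST : S.card + T.card ≤ Fintype.card V := by
      rw [← card_union_of_disjoint (disjoint_filter.2 fun v _ h h' => by omega)]
      exact card_le_univ _
    calc _ ≤ _ + _ := SimpleGraph.edist_triangle
      _ ≤ (S.card : ℕ∞) + T.card := add_le_add h₁ h₂
      _ ≤ _ := by exact_mod_cast hST

lemma exists_agreeBelow_succ {g : V → ℕ} (hg : IsGrundy G g) (hk : grundyNum G + 1 ≤ k)
    {i : ℕ} (hi : i < k) {c : V → Fin k} (hc : Proper G c) (hcg : AgreeBelow g i c) :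
    ∃ (c' : V → Fin k) (hc' : Proper G c'), AgreeBelow g (i + 1) c' ∧
      (recolorGraph G k).edist ⟨c, hc⟩ ⟨c', hc'⟩ ≤ 2 * Fintype.card V := by
  obtain ⟨c₁, hc₁, hc₁g, hc₁Γ, h₁⟩ := exists_greedy_agreeBelow hg hc hcg
  obtain ⟨c₂, hc₂, hc₂g, h₂⟩ := exists_agreeBelow_succ_of_lt_grundyNum hg hk hi hc₁ hc₁g hc₁Γ
  refine ⟨c₂, hc₂, hc₂g, ?_⟩
  calc _ ≤ _ + _ := SimpleGraph.edist_triangle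
    _ ≤ _ := add_le_add h₁ h₂
    _ = _ := by ring

lemma exists_forall_recolorGraph_edist_le {g : V → ℕ} (hg : IsGrundy G g) {t : ℕ}
    (hgt : ∀ v, g v < t) (htk : t < k) (hk : grundyNum G + 1 ≤ k) :
    ∃ γ, ∀ c, (recolorGraph G k).edist c γ ≤ 2 * t * Fintype.card V := by
  let γ : V → Fin k := fun v => ⟨g v, (hgt v).trans htk⟩
  have hγ : Proper G γ := fun x y h e => hg.1 h (congrArg Fin.val e)
  suffices h : ∀ d i c (hc : Proper G c), i + d = t → AgreeBelow g i c →
      (recolorGraph G k).edist ⟨c, hc⟩ ⟨γ, hγ⟩ ≤ 2 * d * Fintype.card V from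
    ⟨⟨γ, hγ⟩, fun c => h t 0 c.1 c.2 (zero_add t) fun v => by simp⟩
  intro d
  induction d with
  | zero =>
    intro i c hc hit hcg
    have : c = γ := funext fun v => Fin.ext <| show (c v : ℕ) = g v by
      have := hcg v
      have := hgt v
      omega
    subst this
    simp
  | succ d ih =>
    intro i c hc hit hcg
    obtain ⟨c', hc', hcg', h⟩ := exists_agreeBelow_succ hg hk (by omega) hc hcg
    calc _ ≤ _ + _ := SimpleGraph.edist_triangle
      _ ≤ _ + _ := add_le_add h (ih (i + 1) c' hc' (by omega) hcg')
      _ = _ := by push_cast; ring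

end Phases

lemma SimpleGraph.connected_and_dist_le_of_forall_edist_le {W : Type*} {H : SimpleGraph W}
    (γ : W) {r : ℕ} (h : ∀ a, H.edist a γ ≤ r) :
    H.Connected ∧ ∀ a b, H.dist a b ≤ 2 * r := by
  have hreach : ∀ a, H.Reachable a γ := fun a =>
    reachable_of_edist_ne_top (ne_top_of_le_ne_top (ENat.natCast_ne_top r) (h a))
  refine ⟨(connected_iff_exists_forall_reachable H).2 ⟨γ, fun a => (hreach a).symm⟩,
    fun a b => ?_⟩
  have : H.edist a b ≤ ((2 * r : ℕ) : ℕ∞) := calc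
    H.edist a b ≤ H.edist a γ + H.edist γ b := H.edist_triangle
    _ ≤ r + r := add_le_add (h a) (edist_comm.trans_le (h b))
    _ = ((2 * r : ℕ) : ℕ∞) := by push_cast; ring
  rw [← ((hreach a).trans (hreach b).symm).coe_dist_eq_edist] at this
  exact_mod_cast this

/-- If `k ≥ χ_g(G) + 1` then `G` is `k`-mixing and the diameter of
the `k`-recoloring graph is at most `4·χ(G)·n`. -/
theorem grundy_mixing (n k : ℕ) (G : SimpleGraph (Fin n))
    (hk : grundyNum G + 1 ≤ k) :
    (recolorGraph G k).Connected ∧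
      ∀ α β : {c : Fin n → Fin k // Proper G c},
        ((recolorGraph G k).dist α β : ℕ∞) ≤ 4 * G.chromaticNumber * n := by
  obtain ⟨t, ht⟩ := ENat.ne_top_iff_exists.1
    (chromaticNumber_ne_top_iff_exists.2 ⟨_, G.colorable_of_fintype⟩)
  obtain ⟨g, hg, hgt⟩ := exists_isGrundy_lt_of_colorable (chromaticNumber_le_iff_colorable.1 ht.ge)
  have htk : t < k := by
    have := ht ▸ chromaticNumber_le_grundyNum G
    have : t ≤ grundyNum G := by exact_mod_cast this
    omega
  obtain ⟨γ, hγ⟩ := exists_forall_recolorGraph_edist_le hg hgt htk hk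
  obtain ⟨hconn, hdist⟩ := connected_and_dist_le_of_forall_edist_le γ hγ
  refine ⟨hconn, fun α β => ?_⟩
  calc ((recolorGraph G k).dist α β : ℕ∞) ≤ ((2 * (2 * t * Fintype.card (Fin n)) : ℕ) : ℕ∞) := by
        exact_mod_cast hdist α β
    _ = 4 * G.chromaticNumber * n := by rw [← ht, Fintype.card_fin]; push_cast; ring
end

section
/- For any integer k ≥ n+1, any proper k-coloring of the complete graph K_n can be transformed into any other proper k-coloring of K_n by a sequence of single-vertex recolorings, through proper colorings only, in which every vertex is recolored at most twice. -/
/-!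
Some color is always free, since `k > n`. Charge a vertex of color `a` nothing if `a` is its
target color, two if `a` is the target color of another vertex, and one otherwise. While the
coloring differs from the target, some vertex can move to a free color and lose charge: either a
vertex whose target color is free moves there, or every target color is in use, hence no free
color is a target, and the vertex sitting on another vertex's target color steps aside to a free
color. A move changes no other vertex's charge, so by induction on the total charge every vertex
is recolored at most as often as its initial charge, hence at most twice.
-/

open SimpleGraph

open Function

namespace RecolorSeqLe

variable {V : Type} {G : SimpleGraph V} {k : ℕ} {α β : V → Fin k} {b b' : V → ℕ}

theorem refl (hα : Proper G α) : RecolorSeqLe G α α b :=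
  ⟨0, fun _ => α, rfl, rfl, fun _ _ => hα, fun _ hi => absurd hi (Nat.not_lt_zero _),
    fun _ => by simp⟩

theorem mono (h : RecolorSeqLe G α β b) (hb : b ≤ b') : RecolorSeqLe G α β b' := by
  obtain ⟨m, c, h0, hm, hproper, hstep, hcount⟩ := h
  exact ⟨m, c, h0, hm, hproper, hstep, fun v => (hcount v).trans (hb v)⟩

theorem update_cons [DecidableEq V] {x : V} {a : Fin k} (hα : Proper G α) (ha : α x ≠ a)
    (h : RecolorSeqLe G (update α x a) β b) :
    RecolorSeqLe G α β (update b x (b x + 1)) := by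
  obtain ⟨m, c, h0, hm, hproper, hstep, hcount⟩ := h
  have hfirst : ∀ v, α v ≠ update α x a v ↔ v = x := fun v => by
    rcases eq_or_ne v x with rfl | hv
    · simpa using ha
    · simp [hv]
  refine ⟨m + 1, fun i => if i = 0 then α else c (i - 1), by simp, by simp [hm], ?_, ?_, ?_⟩
  · rintro (_ | i) hi
    · simp [hα]
    · simpa using hproper i (by omega)
  · rintro (_ | i) hi
    · simp [h0, hfirst]
    · simpa using hstep i (by omega)
  · intro v
    rw [Finset.card_filter, Finset.sum_range_succ', ← Finset.card_filter]
    simp only [Nat.add_sub_cancel, Nat.add_eq_zero_iff, one_ne_zero, and_false, if_false,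
      if_true, h0]
    rcases eq_or_ne v x with rfl | hv
    · simpa [ha] using hcount v
    · simpa [hv] using hcount v

end RecolorSeqLe

theorem Function.Injective.update_of_notMem_range {A B : Type*} [DecidableEq A] {c : A → B}
    (hc : Injective c) (x : A) {a : B} (ha : a ∉ Set.range c) : Injective (update c x a) := by
  intro y z h
  simp only [update_apply] at h
  split_ifs at h with hy hz hz
  · exact hy.trans hz.symm
  · exact absurd ⟨z, h.symm⟩ ha
  · exact absurd ⟨y, h⟩ ha
  · exact hc h

section Clique

variable {V : Type} {k : ℕ}

theorem proper_top_iff_injective {c : V → Fin k} : Proper ⊤ c ↔ Injective c := by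
  simp only [Proper, top_adj, Injective]
  exact ⟨fun h x y => not_imp_not.mp (@h x y), fun h x y => mt (@h x y)⟩

open Classical in
noncomputable def recolorCost (β : V → Fin k) (v : V) (a : Fin k) : ℕ :=
  if a = β v then 0 else if a ∈ Set.range β then 2 else 1

theorem recolorCost_le_two (β : V → Fin k) (v : V) (a : Fin k) : recolorCost β v a ≤ 2 := by
  unfold recolorCost
  split_ifs <;> omega

theorem exists_move_lt_recolorCost [Fintype V] {β c : V → Fin k} (hβ : Injective β)
    (hne : c ≠ β) (hk : Fintype.card V < k) :
    ∃ x a, a ∉ Set.range c ∧ recolorCost β x a < recolorCost β x (c x) := by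
  obtain ⟨u, hu⟩ := Function.ne_iff.mp hne
  by_cases hfree : ∃ u, c u ≠ β u ∧ β u ∉ Set.range c
  · obtain ⟨u, hu, hfree⟩ := hfree
    refine ⟨u, β u, hfree, ?_⟩
    simp only [recolorCost, if_neg hu]
    split_ifs <;> omega
  · push Not at hfree
    obtain ⟨w, hw⟩ := hfree u hu
    obtain ⟨s, hs⟩ : ∃ s, s ∉ Set.range c := by
      by_contra! h
      exact (Fintype.card_le_of_surjective c h).not_gt (by simpa using hk)
    have hsβ : s ∉ Set.range β := by
      rintro ⟨v, rfl⟩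
      by_cases hv : c v = β v
      · exact hs ⟨v, hv⟩
      · exact hs (hfree v hv)
    have hwu : w ≠ u := by rintro rfl; exact hu hw
    refine ⟨w, s, hs, ?_⟩
    have hsw : s ≠ β w := fun h => hsβ ⟨w, h.symm⟩
    simp [recolorCost, hsw, hsβ, hw, hβ.ne hwu.symm]

theorem recolorSeqLe_recolorCost [Fintype V] [DecidableEq V] {β : V → Fin k}
    (hβ : Injective β) (hk : Fintype.card V < k) (c : V → Fin k) (hc : Injective c) :
    RecolorSeqLe ⊤ c β (fun v => recolorCost β v (c v)) := by
  induction hμ : ∑ v, recolorCost β v (c v) using Nat.strong_induction_on generalizing c with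
  | _ μ ih =>
    by_cases hcβ : c = β
    · subst hcβ
      exact RecolorSeqLe.refl (proper_top_iff_injective.mpr hc)
    obtain ⟨x, a, ha, hlt⟩ := exists_move_lt_recolorCost hβ hcβ hk
    set cost' := fun v => recolorCost β v (update c x a v)
    have hcost : update cost' x (cost' x + 1) ≤ fun v => recolorCost β v (c v) := by
      intro v
      rcases eq_or_ne v x with rfl | hv
      · simpa [cost'] using hlt
      · simp [cost', hv]
    have hsum : ∑ v, cost' v < μ := by
      rw [← hμ]
      refine Finset.sum_lt_sum (fun v _ => le_trans ?_ (hcost v)) ⟨x, Finset.mem_univ x, ?_⟩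
      · rcases eq_or_ne v x with rfl | hv
        · simp
        · simp [hv]
      · simpa [cost'] using hlt
    have htail := ih _ hsum (update c x a) (hc.update_of_notMem_range x ha) rfl
    exact (RecolorSeqLe.update_cons (proper_top_iff_injective.mpr hc)
      (fun h => ha ⟨x, h⟩) htail).mono hcost

end Clique

/-- For `k ≥ n + 1`, any proper `k`-coloring of the complete graph
`K_n` can be transformed into any other through proper colorings, recoloring every
vertex at most twice. -/
theorem clique_recoloring (n k : ℕ) (hk : n + 1 ≤ k)
    (α β : Fin n → Fin k)
    (hα : Proper (⊤ : SimpleGraph (Fin n)) α)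
    (hβ : Proper (⊤ : SimpleGraph (Fin n)) β) :
    RecolorSeqLe (⊤ : SimpleGraph (Fin n)) α β (fun _ => 2) :=
  (recolorSeqLe_recolorCost (proper_top_iff_injective.mp hβ) (by simpa using hk) α
    (proper_top_iff_injective.mp hα)).mono fun v => recolorCost_le_two β v (α v)
end

section
/- Let T be an ℓ-complete tree decomposition of a graph G and let x be a baby of T, i.e. a vertex appearing in exactly one bag B_u where u is a leaf of T. Then T[V∖{x}] (the tree decomposition obtained by removing x from all bags and contracting every edge uv of T for which B_u∖{x} ⊆ B_v∖{x}) is an ℓ-complete tree decomposition of G∖x. -/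
open SimpleGraph

/-!
Adjacent bags of an `ℓ`-complete decomposition differ by exactly one vertex on each side, so
the bag of the leaf `u` is the bag of its neighbour `w` plus the baby `x`. Deleting the leaf `u`
keeps the tree a tree and every vertex support connected, since a leaf is never an inner vertex
of a path; and every remaining bag avoids `x`, so bag sizes and adhesions are unchanged.
-/

namespace SimpleGraph

variable {ι : Type} {T : SimpleGraph ι} {u : ι}

theorem IsTree.induce_ne_of_subsingleton_neighborSet (hT : T.IsTree)
    (hu : (T.neighborSet u).Subsingleton) {w : ι} (hwu : w ≠ u) :
    (T.induce {v | v ≠ u}).IsTree := by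
  have : Nonempty {v | v ≠ u} := ⟨⟨w, hwu⟩⟩
  refine ⟨Connected.mk ?_, hT.isAcyclic.induce _⟩
  refine hT.connected.preconnected.induce_of_degree_eq_one fun v hv => ?_
  obtain rfl : v = u := not_not.1 hv
  exact hu

theorem Connected.induce_induce_ne_of_subsingleton_neighborSet {S : Set ι}
    (hS : (T.induce S).Connected) (hu : (T.neighborSet u).Subsingleton)
    {w : ι} (hwS : w ∈ S) (hwu : w ≠ u) :
    ((T.induce {v | v ≠ u}).induce {p | p.1 ∈ S}).Connected := by
  have hpre : ((T.induce S).induce {a | a.1 ≠ u}).Preconnected := by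
    refine hS.preconnected.induce_of_degree_eq_one fun a ha b hb c hc => ?_
    obtain rfl : a.1 = u := not_not.1 ha
    exact Subtype.ext (hu hb hc)
  have : Nonempty {a : S | a.1 ≠ u} := ⟨⟨⟨w, hwS⟩, hwu⟩⟩
  refine (Connected.mk hpre).map ⟨fun a => ⟨⟨a.1.1, a.2⟩, a.1.2⟩, fun h => h⟩ ?_
  rintro ⟨⟨v, hvu⟩, hvS⟩
  exact ⟨⟨⟨v, hvS⟩, hvu⟩, rfl⟩

end SimpleGraph

namespace TreeDecomp

variable {V ι : Type} {G : SimpleGraph V} (td : TreeDecomp G ι)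

theorem exists_ne_forall_mem_bag_of_adj {S : Set V} {u w : ι} (huw : td.T.Adj u w)
    (hS : ∀ y ∈ S, y ∈ td.bag u → y ∈ td.bag w) (v : ι) :
    ∃ v' ≠ u, ∀ y ∈ S, y ∈ td.bag v → y ∈ td.bag v' := by
  by_cases hvu : v = u
  · exact ⟨w, huw.ne', hvu ▸ hS⟩
  · exact ⟨v, hvu, fun _ _ => id⟩

section DeleteLeaf

variable (S : Set V) [DecidablePred (· ∈ S)] {u w : ι} (huw : td.T.Adj u w)
  (hu : (td.T.neighborSet u).Subsingleton) (hS : ∀ y ∈ S, y ∈ td.bag u → y ∈ td.bag w)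

def deleteLeaf : TreeDecomp (G.induce S) {v // v ≠ u} where
  T := td.T.induce {v | v ≠ u}
  isTree := td.isTree.induce_ne_of_subsingleton_neighborSet hu huw.ne'
  bag v := (td.bag v).subtype (· ∈ S)
  mem_bag := by
    rintro ⟨y, hy⟩
    obtain ⟨v, hv⟩ := td.mem_bag y
    obtain ⟨v', hv'u, hv'⟩ := td.exists_ne_forall_mem_bag_of_adj huw hS v
    exact ⟨⟨v', hv'u⟩, Finset.mem_subtype.2 (hv' y hy hv)⟩
  edge_bag := by
    rintro ⟨y, hy⟩ ⟨z, hz⟩ hyz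
    obtain ⟨v, hyv, hzv⟩ := td.edge_bag hyz
    obtain ⟨v', hv'u, hv'⟩ := td.exists_ne_forall_mem_bag_of_adj huw hS v
    exact ⟨⟨v', hv'u⟩, Finset.mem_subtype.2 (hv' y hy hyv), Finset.mem_subtype.2 (hv' z hz hzv)⟩
  support_connected := by
    rintro ⟨y, hy⟩
    obtain ⟨v, hv⟩ := td.mem_bag y
    obtain ⟨v', hv'u, hv'⟩ := td.exists_ne_forall_mem_bag_of_adj huw hS v
    have hsupp : {p : {v // v ≠ u} | ⟨y, hy⟩ ∈ (td.bag p).subtype (· ∈ S)} =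
        {p | p.1 ∈ {v | y ∈ td.bag v}} := Set.ext fun _ => Finset.mem_subtype
    rw [hsupp]
    exact (td.support_connected y).induce_induce_ne_of_subsingleton_neighborSet hu
      (hv' y hy hv) hv'u

theorem isComplete_deleteLeaf [DecidableEq V] {ℓ : ℕ} (hcomp : td.IsComplete ℓ)
    (hSbag : ∀ v ≠ u, ∀ y ∈ td.bag v, y ∈ S) : (td.deleteLeaf S huw hu hS).IsComplete ℓ := by
  let e := Function.Embedding.subtype (· ∈ S)
  have hbag (v : {v // v ≠ u}) : ((td.deleteLeaf S huw hu hS).bag v).map e = td.bag v :=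
    Finset.subtype_map_of_mem (hSbag v v.2)
  refine ⟨fun v => ?_, fun v v' hvv' => ?_⟩
  · rw [← Finset.card_map e, hbag, hcomp.1]
  · rw [← Finset.card_map e, Finset.map_inter, hbag, hbag]
    exact hcomp.2 hvv'

end DeleteLeaf

theorem IsComplete.sdiff_eq_singleton_of_adj [DecidableEq V] {td : TreeDecomp G ι} {ℓ : ℕ}
    (hcomp : td.IsComplete ℓ) {u v : ι} (huv : td.T.Adj u v) {x : V}
    (hx : x ∈ td.bag u \ td.bag v) : td.bag u \ td.bag v = {x} := by
  have hcard : (td.bag u \ td.bag v).card = 1 := by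
    rw [Finset.card_sdiff, Finset.inter_comm, hcomp.1 u, hcomp.2 huv]
    omega
  obtain ⟨a, ha⟩ := Finset.card_eq_one.1 hcard
  rw [ha] at hx ⊢
  rw [Finset.mem_singleton.1 hx]

end TreeDecomp

/-- In an `ℓ`-complete decomposition only the edge at the leaf `u` becomes contractible once `x`
is removed, so `T[V ∖ {x}]` is `T` with the node `u` deleted. -/
theorem baby_removal_general (n ℓ : ℕ) (V : Type) [DecidableEq V] (G : SimpleGraph V)
    (td : TreeDecomp G (Fin n)) (hcomp : td.IsComplete ℓ)
    (x : V) (u : Fin n)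
    (hleaf : ∃! w, td.T.Adj u w)
    (hunique : ∀ v, x ∈ td.bag v → v = u) :
    ∃ td' : TreeDecomp (G.induce {y : V | y ≠ x}) {v : Fin n // v ≠ u},
      td'.T = td.T.induce {v : Fin n | v ≠ u} ∧
      (∀ (v : {v : Fin n // v ≠ u}) (y : {y : V | y ≠ x}),
        y ∈ td'.bag v ↔ (y : V) ∈ td.bag v.1) ∧
      td'.IsComplete ℓ := by
  obtain ⟨w, huw, hw⟩ := hleaf
  have hu : (td.T.neighborSet u).Subsingleton := fun a ha b hb => (hw a ha).trans (hw b hb).symm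
  have hxu : x ∈ td.bag u := by
    obtain ⟨v, hv⟩ := td.mem_bag x
    exact hunique v hv ▸ hv
  have hxw : x ∉ td.bag w := fun h => huw.ne' (hunique w h)
  have hS : ∀ y ∈ {y | y ≠ x}, y ∈ td.bag u → y ∈ td.bag w := fun y hyx hyu => by
    by_contra hyw
    have hy : y ∈ td.bag u \ td.bag w := Finset.mem_sdiff.2 ⟨hyu, hyw⟩
    rw [hcomp.sdiff_eq_singleton_of_adj huw (Finset.mem_sdiff.2 ⟨hxu, hxw⟩)] at hy
    exact hyx (Finset.mem_singleton.1 hy)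
  refine ⟨td.deleteLeaf _ huw hu hS, rfl, fun v y => Finset.mem_subtype, ?_⟩
  exact td.isComplete_deleteLeaf _ huw hu hS hcomp fun v hvu y hy hyx =>
    hvu (hunique v (hyx ▸ hy))

/-- Removing a baby `x` (a vertex appearing in exactly one bag
`B_u`, with `u` a leaf of `T`) from an `ℓ`-complete tree decomposition — which
contracts the edge at the leaf `u`, i.e. deletes the node `u` — yields an
`ℓ`-complete tree decomposition of `G ∖ x`. -/
theorem baby_removal (n ℓ : ℕ) (V : Type) [DecidableEq V] (G : SimpleGraph V)
    (td : TreeDecomp G (Fin n)) (hcomp : td.IsComplete ℓ)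
    (x : V) (u : Fin n)
    (hleaf : ∃! w, td.T.Adj u w)
    (hx : x ∈ td.bag u) (hunique : ∀ v, x ∈ td.bag v → v = u) :
    ∃ td' : TreeDecomp (G.induce {y : V | y ≠ x}) {v : Fin n // v ≠ u},
      td'.T = td.T.induce {v : Fin n | v ≠ u} ∧
      (∀ (v : {v : Fin n // v ≠ u}) (y : {y : V | y ≠ x}),
        y ∈ td'.bag v ↔ (y : V) ∈ td.bag v.1) ∧
      td'.IsComplete ℓ :=
  baby_removal_general n ℓ V G td hcomp x u hleaf hunique
end

section
/- Let T be an ℓ-complete tree decomposition of a graph G. Then the family partition of V(G) (the partition into equivalence classes of the transitive closure of the T-parent relation) exists and is unique; it consists of exactly ℓ+1 families; each family contains exactly one vertex of every bag of T; and each family is an independent set of G. -/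
open SimpleGraph

/-!
Fix a root node `r`. Crossing a tree edge `uv` maps `B_u` bijectively onto `B_v`: it fixes
`B_u ∩ B_v` and sends the vertex of `B_u ∖ B_v` to its `T`-parent, the vertex of `B_v ∖ B_u`.
Transporting `x` this way along the tree path from a bag containing `x` to `B_r` gives a
representative `rep r x ∈ B_r` that does not depend on the bag, because the bags containing `x`
form a subtree and crossing an edge of that subtree fixes `x`. `T`-parents have the same
representative and every vertex is related to its own, so the families are the fibres of `rep r`.
Since `rep r` is injective on every bag and all bags have `ℓ + 1` vertices, each fibre meets every
bag exactly once; an edge of `G` lies in some bag, so its ends lie in different families.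
-/

namespace SimpleGraph

lemma Reachable.apply_eq_of_forall_adj {V β : Type*} {G : SimpleGraph V} {f : V → β}
    (hf : ∀ ⦃a b⦄, G.Adj a b → f a = f b) {u v : V} (h : G.Reachable u v) : f u = f v := by
  obtain ⟨W⟩ := h
  induction W with
  | nil => rfl
  | cons hab _ ih => exact (hf hab).trans ih

namespace IsTree

variable {ι : Type} {T : SimpleGraph ι} (hT : T.IsTree)

noncomputable def path (u v : ι) : T.Walk u v :=
  (hT.existsUnique_path u v).choose

lemma path_isPath (u v : ι) : (hT.path u v).IsPath :=
  (hT.existsUnique_path u v).choose_spec.1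

lemma eq_path {u v : ι} {p : T.Walk u v} (hp : p.IsPath) : p = hT.path u v :=
  (hT.existsUnique_path u v).choose_spec.2 p hp

lemma path_eq_cons_or {u v : ι} (h : T.Adj u v) (r : ι) :
    hT.path u r = .cons h (hT.path v r) ∨ hT.path v r = .cons h.symm (hT.path u r) := by
  by_cases hv : v ∈ (hT.path u r).support
  · left
    have hu : u ∉ (hT.path v r).support := by
      simpa using hT.isAcyclic.ne_mem_support_of_support_of_adj_of_isPath
        (hT.path_isPath u r).reverse (hT.path_isPath v r).reverse h (by simpa using hv)
    exact (hT.eq_path ((Walk.cons_isPath_iff h _).2 ⟨hT.path_isPath v r, hu⟩)).symm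
  · right
    exact (hT.eq_path ((Walk.cons_isPath_iff h.symm _).2 ⟨hT.path_isPath u r, hv⟩)).symm

end IsTree

end SimpleGraph

namespace TreeDecomp

variable {V ι : Type} [DecidableEq V] {G : SimpleGraph V} (td : TreeDecomp G ι)

noncomputable def step (u v : ι) (x : V) : V :=
  if x ∈ td.bag v then x else if h : (td.bag v \ td.bag u).Nonempty then h.choose else x

noncomputable def transport : ∀ {u v : ι}, td.T.Walk u v → V → V
  | _, _, .nil => id
  | u, _, .cons (v := w) _ p => transport p ∘ td.step u w

noncomputable def rep (r : ι) (x : V) : V :=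
  td.transport (td.isTree.path (td.mem_bag x).choose r) x

variable {td}

lemma step_of_mem {u v : ι} {x : V} (hx : x ∈ td.bag v) : td.step u v x = x :=
  if_pos hx

@[simp]
lemma transport_cons {u v w : ι} (h : td.T.Adj u v) (p : td.T.Walk v w) (x : V) :
    td.transport (.cons h p) x = td.transport p (td.step u v x) :=
  rfl

namespace IsComplete

variable {ℓ : ℕ} (hcomp : td.IsComplete ℓ)
include hcomp

lemma card_sdiff {u v : ι} (h : td.T.Adj u v) : (td.bag u \ td.bag v).card = 1 := by
  rw [← Finset.sdiff_inter_self_left, Finset.card_sdiff_of_subset Finset.inter_subset_left,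
    hcomp.1 u, hcomp.2 h, Nat.add_sub_cancel_left]

lemma sdiff_eq_singleton {u v : ι} (h : td.T.Adj u v) {x : V} (hx : x ∈ td.bag u)
    (hx' : x ∉ td.bag v) : td.bag u \ td.bag v = {x} := by
  obtain ⟨a, ha⟩ := Finset.card_eq_one.1 (hcomp.card_sdiff h)
  have : x ∈ td.bag u \ td.bag v := Finset.mem_sdiff.2 ⟨hx, hx'⟩
  rw [ha, Finset.mem_singleton] at this
  rw [ha, this]

lemma step_mem_sdiff {u v : ι} (h : td.T.Adj u v) {x : V} (hx : x ∉ td.bag v) :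
    td.step u v x ∈ td.bag v \ td.bag u := by
  have hne : (td.bag v \ td.bag u).Nonempty := by
    simp [← Finset.card_pos, hcomp.card_sdiff h.symm]
  rw [step, if_neg hx, dif_pos hne]
  exact hne.choose_spec

lemma step_mem {u v : ι} (h : td.T.Adj u v) (x : V) : td.step u v x ∈ td.bag v := by
  by_cases hx : x ∈ td.bag v
  · rwa [step_of_mem hx]
  · exact (Finset.mem_sdiff.1 (hcomp.step_mem_sdiff h hx)).1

lemma parent_step {u v : ι} (h : td.T.Adj u v) {x : V} (hx : x ∈ td.bag u)
    (hx' : x ∉ td.bag v) : td.Parent x (td.step u v x) := by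
  obtain ⟨hyv, hyu⟩ := Finset.mem_sdiff.1 (hcomp.step_mem_sdiff h hx')
  exact ⟨u, v, h, hcomp.sdiff_eq_singleton h hx hx', hcomp.sdiff_eq_singleton h.symm hyv hyu⟩

lemma step_step {u v : ι} (h : td.T.Adj u v) {x : V} (hx : x ∈ td.bag u) :
    td.step v u (td.step u v x) = x := by
  by_cases hx' : x ∈ td.bag v
  · rw [step_of_mem hx', step_of_mem hx]
  · obtain ⟨hyv, hyu⟩ := Finset.mem_sdiff.1 (hcomp.step_mem_sdiff h hx')
    have := hcomp.step_mem_sdiff h.symm hyu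
    rwa [hcomp.sdiff_eq_singleton h hx hx', Finset.mem_singleton] at this

lemma mapsTo_transport {u v : ι} (W : td.T.Walk u v) :
    Set.MapsTo (td.transport W) (td.bag u) (td.bag v) := by
  induction W with
  | nil => exact Set.mapsTo_id _
  | cons h p ih => exact fun x _ => ih (hcomp.step_mem h x)

lemma injOn_transport {u v : ι} (W : td.T.Walk u v) :
    Set.InjOn (td.transport W) (td.bag u) := by
  induction W with
  | nil => exact Set.injOn_id _
  | cons h p ih =>
    intro x hx y hy hxy
    rw [← hcomp.step_step h hx, ← hcomp.step_step h hy,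
      ih (hcomp.step_mem h x) (hcomp.step_mem h y) hxy]

lemma eqvGen_transport {u v : ι} (W : td.T.Walk u v) {x : V} (hx : x ∈ td.bag u) :
    Relation.EqvGen td.Parent x (td.transport W x) := by
  induction W generalizing x with
  | nil => exact .refl x
  | @cons u w v h p ih =>
    rw [transport_cons]
    by_cases hxw : x ∈ td.bag w
    · rw [step_of_mem hxw]
      exact ih hxw
    · exact .trans _ _ _ (.rel _ _ (hcomp.parent_step h hx hxw)) (ih (hcomp.step_mem h x))

lemma transport_path_step {u v : ι} (h : td.T.Adj u v) {x : V} (hx : x ∈ td.bag u) (r : ι) :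
    td.transport (td.isTree.path u r) x = td.transport (td.isTree.path v r) (td.step u v x) := by
  rcases td.isTree.path_eq_cons_or h r with e | e
  · rw [e, transport_cons]
  · rw [e, transport_cons, hcomp.step_step h hx]

lemma rep_eq_transport {u : ι} {x : V} (hx : x ∈ td.bag u) (r : ι) :
    td.rep r x = td.transport (td.isTree.path u r) x := by
  let f : {w | x ∈ td.bag w} → V := fun w => td.transport (td.isTree.path w r) x
  have hf : ∀ ⦃a b⦄, (td.T.induce {w | x ∈ td.bag w}).Adj a b → f a = f b := fun a b hab => by
    have hab : td.T.Adj a b := hab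
    simp only [f]
    rw [hcomp.transport_path_step hab a.2, step_of_mem b.2]
  exact (td.support_connected x).preconnected ⟨_, (td.mem_bag x).choose_spec⟩ ⟨u, hx⟩
    |>.apply_eq_of_forall_adj hf

lemma rep_mem (r : ι) (x : V) : td.rep r x ∈ td.bag r :=
  hcomp.mapsTo_transport _ (td.mem_bag x).choose_spec

lemma eqvGen_rep (r : ι) (x : V) : Relation.EqvGen td.Parent x (td.rep r x) :=
  hcomp.eqvGen_transport _ (td.mem_bag x).choose_spec

lemma rep_eq_of_parent (r : ι) {x y : V} (hxy : td.Parent x y) : td.rep r x = td.rep r y := by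
  obtain ⟨u, v, h, hx, hy⟩ := hxy
  obtain ⟨hxu, hxv⟩ := Finset.mem_sdiff.1 (hx ▸ Finset.mem_singleton_self x)
  have hyv : y ∈ td.bag v := (Finset.mem_sdiff.1 (hy ▸ Finset.mem_singleton_self y)).1
  have hstep : td.step u v x = y := by
    simpa [hy] using hcomp.step_mem_sdiff h hxv
  rw [hcomp.rep_eq_transport hxu, hcomp.rep_eq_transport hyv, hcomp.transport_path_step h hxu,
    hstep]

lemma eqvGen_parent_iff_rep_eq (r : ι) (x y : V) :
    Relation.EqvGen td.Parent x y ↔ td.rep r x = td.rep r y := by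
  refine ⟨fun h => ?_, fun h => ?_⟩
  · induction h with
    | rel a b hab => exact hcomp.rep_eq_of_parent r hab
    | refl => rfl
    | symm _ _ _ ih => exact ih.symm
    | trans _ _ _ _ _ ih₁ ih₂ => exact ih₁.trans ih₂
  · exact .trans _ _ _ (hcomp.eqvGen_rep r x) (h ▸ .symm _ _ (hcomp.eqvGen_rep r y))

lemma bijOn_rep (r u : ι) : Set.BijOn (td.rep r) (td.bag u) (td.bag r) := by
  have hmaps : Set.MapsTo (td.rep r) (td.bag u) (td.bag r) := fun x _ => hcomp.rep_mem r x
  have hinj : Set.InjOn (td.rep r) (td.bag u) := fun x hx y hy hxy => by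
    rw [hcomp.rep_eq_transport hx, hcomp.rep_eq_transport hy] at hxy
    exact hcomp.injOn_transport _ hx hy hxy
  exact ⟨hmaps, hinj, Finset.surjOn_of_injOn_of_card_le _ hmaps hinj
    (by rw [hcomp.1 r, hcomp.1 u])⟩

lemma exists_family_coloring : ∃ c : V → Fin (ℓ + 1),
    (∀ x y, Relation.EqvGen td.Parent x y ↔ c x = c y) ∧
    ∀ u, Set.BijOn c (td.bag u) Set.univ := by
  obtain ⟨r⟩ := td.isTree.connected.nonempty
  let e : td.bag r ≃ Fin (ℓ + 1) := Finset.equivFinOfCardEq (hcomp.1 r)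
  have hc : ∀ x y, e ⟨td.rep r x, hcomp.rep_mem r x⟩ = e ⟨td.rep r y, hcomp.rep_mem r y⟩ ↔
      td.rep r x = td.rep r y := fun x y => by
    rw [e.injective.eq_iff, Subtype.mk.injEq]
  refine ⟨fun x => e ⟨td.rep r x, hcomp.rep_mem r x⟩, fun x y => ?_, fun u => ?_⟩
  · rw [hc, hcomp.eqvGen_parent_iff_rep_eq r]
  · refine ⟨Set.mapsTo_univ _ _, fun x hx y hy hxy => (hcomp.bijOn_rep r u).injOn hx hy
      ((hc x y).1 hxy), fun i _ => ?_⟩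
    obtain ⟨x, hx, hxi⟩ := (hcomp.bijOn_rep r u).surjOn (e.symm i).2
    exact ⟨x, hx, by simp only [hxi, Subtype.coe_eta, Equiv.apply_symm_apply]⟩

end IsComplete

end TreeDecomp

/-- The family partition of an `ℓ`-complete tree decomposition
exists and is unique: there are exactly `ℓ + 1` families (the equivalence classes
of the transitive closure of the parent relation), each family meets every bag in
exactly one vertex, and each family is an independent set. -/
theorem family_partition (n ℓ : ℕ) (V : Type) [DecidableEq V] (G : SimpleGraph V)
    (td : TreeDecomp G (Fin n)) (hcomp : td.IsComplete ℓ) :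
    ∃ F : Fin (ℓ + 1) → Set V,
      (∀ x : V, ∃! i, x ∈ F i) ∧
      (∀ x y : V, Relation.EqvGen td.Parent x y ↔ ∃ i, x ∈ F i ∧ y ∈ F i) ∧
      (∀ i u, ∃! x, x ∈ F i ∧ x ∈ td.bag u) ∧
      (∀ i, ∀ x ∈ F i, ∀ y ∈ F i, ¬G.Adj x y) := by
  obtain ⟨c, hfamily, hbij⟩ := hcomp.exists_family_coloring
  refine ⟨fun i => c ⁻¹' {i}, fun x => ⟨c x, rfl, fun i hi => hi.symm⟩, fun x y => ?_,
    fun i u => ?_, ?_⟩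
  · simp [hfamily, eq_comm]
  · obtain ⟨x, hx, rfl⟩ := (hbij u).surjOn (Set.mem_univ i)
    exact ⟨x, ⟨rfl, hx⟩, fun y ⟨hy, hyu⟩ => (hbij u).injOn hyu hx hy⟩
  · rintro i x rfl y hy hxy
    obtain ⟨u, hxu, hyu⟩ := td.edge_bag hxy
    exact hxy.ne ((hbij u).injOn hxu hyu hy.symm)
end

section
/- Let G be a graph on n vertices, let k ≥ tw(G)+2, and let T be a tw(G)-complete tree decomposition of G. If every proper k-coloring of G can be transformed, by at most f(n) single-vertex recolorings through proper k-colorings, into some V-coherent coloring relative to T, then the diameter of the k-recoloring graph R_k(G) is at most 2·(f(n)+n). -/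
open SimpleGraph

/-!
Along an edge of a complete tree decomposition one vertex leaves the bag and one enters, and
these two are parents; so in a `V`-coherent coloring every vertex has a vertex of its color in
every bag, while a bag holds only one vertex of each color. Hence two `V`-coherent colorings
have the same color classes, and each uses at most `tw(G) + 1 < k` colors. With a free color at
hand, the classes are permuted into place by recoloring whole classes, largest first, for at
most twice the number of mismatched vertices; so `α ⟶ γ ⟶ δ ⟶ β` through coherent `γ`, `δ`
costs `f(n) + 2n + f(n)`. The recoloring graph is nonempty since greedily coloring along an
elimination order (a vertex whose topmost bag is deepest has all its neighbours in that bag)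
needs only `tw(G) + 1` colors.
-/

namespace SimpleGraph

variable {V : Type} {G : SimpleGraph V}

lemma Connected.exists_walk_support_subset {S : Set V} (hS : (G.induce S).Connected) {u v : V}
    (hu : u ∈ S) (hv : v ∈ S) : ∃ p : G.Walk u v, ∀ x ∈ p.support, x ∈ S := by
  obtain ⟨q⟩ := hS ⟨u, hu⟩ ⟨v, hv⟩
  refine ⟨q.map (Embedding.induce S).toHom, fun x hx => ?_⟩
  obtain ⟨y, -, rfl⟩ := List.mem_map.mp (Walk.support_map _ _ ▸ hx)
  exact y.2

lemma Walk.dist_lt_of_mem_support_tail {u v x : V} (p : G.Walk u v)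
    (hp : p.length = G.dist u v) (hx : x ∈ p.support.tail) : G.dist x v < G.dist u v := by
  classical
  cases p with
  | nil => simp at hx
  | cons h q =>
    rw [Walk.support_cons, List.tail_cons] at hx
    calc G.dist x v ≤ (q.dropUntil x hx).length := dist_le _
      _ ≤ q.length := q.length_dropUntil_le_length hx
      _ < G.dist u v := by rw [← hp, Walk.length_cons]; omega

theorem IsTree.mem_support_of_forall_dist_le (hG : G.IsTree) {S : Set V}
    (hS : (G.induce S).Connected) {a r s : V} (ha : a ∈ S)
    (hmin : ∀ p ∈ S, G.dist a r ≤ G.dist p r) (hs : s ∈ S) (W : G.Walk s r) :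
    a ∈ W.support := by
  classical
  obtain ⟨Q, hQS⟩ := hS.exists_walk_support_subset hs ha
  obtain ⟨R, hR, hRlen⟩ := (hG.connected a r).exists_path_of_dist
  have hQR : (Q.bypass.append R).IsPath := by
    rw [Walk.isPath_def, Walk.support_append, List.nodup_append]
    refine ⟨Q.bypass_isPath.support_nodup, hR.support_nodup.sublist (List.tail_sublist _), ?_⟩
    rintro x hx _ hy rfl
    exact (R.dist_lt_of_mem_support_tail hRlen hy).not_ge
      (hmin x (hQS x (Q.support_bypass_subset_support hx)))
  have hW : W.bypass = Q.bypass.append R := congrArg Subtype.val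
    ((hG.isAcyclic.subsingleton_path s r).elim ⟨_, W.bypass_isPath⟩ ⟨_, hQR⟩)
  apply W.support_bypass_subset_support
  rw [hW, Walk.mem_support_append_iff]
  exact Or.inr R.start_mem_support

theorem IsTree.mem_of_forall_dist_le (hG : G.IsTree) {S S' : Set V}
    (hS : (G.induce S).Connected) (hS' : (G.induce S').Connected) {a a' r u : V}
    (ha : a ∈ S) (hmin : ∀ p ∈ S, G.dist a r ≤ G.dist p r)
    (ha' : a' ∈ S') (hu : u ∈ S) (hu' : u ∈ S') (hle : G.dist a' r ≤ G.dist a r) : a ∈ S' := by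
  classical
  obtain ⟨Q, hQS'⟩ := hS'.exists_walk_support_subset hu' ha'
  obtain ⟨R, -, hRlen⟩ := (hG.connected a' r).exists_path_of_dist
  have haQR := hG.mem_support_of_forall_dist_le hS ha hmin hu (Q.append R)
  rcases (Walk.mem_support_append_iff _ _).mp haQR with haQ | haR
  · exact hQS' a haQ
  rw [← R.cons_tail_support, List.mem_cons] at haR
  rcases haR with rfl | haR
  · exact ha'
  · exact absurd hle (R.dist_lt_of_mem_support_tail hRlen haR).not_ge

end SimpleGraph

namespace TreeDecomp

variable {V ι : Type} {G : SimpleGraph V} (td : TreeDecomp G ι)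

theorem exists_mem_bag_forall_adj_mem_bag {s : Finset V} (hs : s.Nonempty) :
    ∃ x ∈ s, ∃ u, x ∈ td.bag u ∧ ∀ y ∈ s, G.Adj x y → y ∈ td.bag u := by
  obtain ⟨r⟩ := td.isTree.connected.nonempty
  have htop (x : V) :
      ∃ a, x ∈ td.bag a ∧ ∀ p, x ∈ td.bag p → td.T.dist a r ≤ td.T.dist p r := by
    obtain ⟨a, ha, hmin⟩ :=
      (measure fun p => td.T.dist p r).wf.has_min {p | x ∈ td.bag p} (td.mem_bag x)
    exact ⟨a, ha, fun p hp => not_lt.mp (hmin p hp)⟩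
  choose top htop hmin using htop
  obtain ⟨x, hx, hxmax⟩ := s.exists_max_image (fun x => td.T.dist (top x) r) hs
  refine ⟨x, hx, top x, htop x, fun y hy hxy => ?_⟩
  obtain ⟨u, hxu, hyu⟩ := td.edge_bag hxy
  exact td.isTree.mem_of_forall_dist_le (td.support_connected x) (td.support_connected y)
    (htop x) (hmin x) (htop y) hxu hyu (hxmax y hy)

theorem exists_proper [Fintype V] [DecidableEq V] {k : ℕ} (hk : ∀ u, (td.bag u).card ≤ k) :
    ∃ c : V → Fin k, Proper G c := by
  obtain ⟨c₀⟩ : Nonempty (V → Fin k) := by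
    rcases isEmpty_or_nonempty V with hV | ⟨⟨v⟩⟩
    · exact ⟨isEmptyElim⟩
    · obtain ⟨u, hu⟩ := td.mem_bag v
      exact ⟨fun _ => ⟨0, (Finset.card_pos.mpr ⟨v, hu⟩).trans_le (hk u)⟩⟩
  suffices ∀ s : Finset V, ∃ c : V → Fin k, ∀ x ∈ s, ∀ y ∈ s, G.Adj x y → c x ≠ c y by
    obtain ⟨c, hc⟩ := this Finset.univ
    exact ⟨c, fun x y hxy => hc x (Finset.mem_univ x) y (Finset.mem_univ y) hxy⟩
  intro s
  induction s using Finset.strongInduction with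
  | H s ih =>
  rcases s.eq_empty_or_nonempty with rfl | hs
  · exact ⟨c₀, by simp⟩
  obtain ⟨x, hx, u, hxu, hnbr⟩ := td.exists_mem_bag_forall_adj_mem_bag hs
  obtain ⟨c, hc⟩ := ih (s.erase x) (Finset.erase_ssubset hx)
  obtain ⟨b, -, hb⟩ := Finset.exists_mem_notMem_of_card_lt_card
      (s := ((td.bag u).erase x).image c) (t := Finset.univ) <|
    calc (((td.bag u).erase x).image c).card ≤ ((td.bag u).erase x).card := Finset.card_image_le
      _ < (td.bag u).card := Finset.card_erase_lt_of_mem hxu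
      _ ≤ k := hk u
      _ = Finset.univ.card := by simp
  have hfree : ∀ y ∈ s, G.Adj x y → c y ≠ b := fun y hy hxy hyb =>
    hb (Finset.mem_image.mpr ⟨y, Finset.mem_erase.mpr ⟨hxy.ne.symm, hnbr y hy hxy⟩, hyb⟩)
  refine ⟨Function.update c x b, fun y hy z hz hyz => ?_⟩
  rcases eq_or_ne y x with rfl | hyx
  · rw [Function.update_self, Function.update_of_ne hyz.ne.symm]
    exact (hfree z hz hyz).symm
  rcases eq_or_ne z x with rfl | hzx
  · rw [Function.update_self, Function.update_of_ne hyx]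
    exact hfree y hy hyz.symm
  rw [Function.update_of_ne hyx, Function.update_of_ne hzx]
  exact hc y (Finset.mem_erase.mpr ⟨hyx, hy⟩) z (Finset.mem_erase.mpr ⟨hzx, hz⟩) hyz

variable [DecidableEq V] {ℓ : ℕ}

theorem exists_sdiff_eq_singleton (htd : td.IsComplete ℓ) {u v : ι} (huv : td.T.Adj u v) :
    ∃ x, td.bag u \ td.bag v = {x} := by
  have h := Finset.card_inter_add_card_sdiff (td.bag u) (td.bag v)
  rw [htd.1 u, htd.2 huv] at h
  exact Finset.card_eq_one.mp (by omega)

theorem exists_mem_bag_reflTransGen_parent (htd : td.IsComplete ℓ) (z : V) (v : ι) :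
    ∃ z' ∈ td.bag v, Relation.ReflTransGen td.Parent z z' := by
  obtain ⟨u, hu⟩ := td.mem_bag z
  obtain ⟨W⟩ := td.isTree.connected u v
  induction W generalizing z with
  | nil => exact ⟨z, hu, .refl⟩
  | @cons u u' v huu' W ih =>
    by_cases hz : z ∈ td.bag u'
    · exact ih z hz
    obtain ⟨x, hx⟩ := td.exists_sdiff_eq_singleton htd huu'
    obtain ⟨y, hy⟩ := td.exists_sdiff_eq_singleton htd huu'.symm
    obtain rfl : z = x := Finset.mem_singleton.mp (hx ▸ Finset.mem_sdiff.mpr ⟨hu, hz⟩)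
    have hyu' : y ∈ td.bag u' := (Finset.mem_sdiff.mp (hy ▸ Finset.mem_singleton_self y)).1
    obtain ⟨z', hz', hyz'⟩ := ih y hyu'
    exact ⟨z', hz', .head ⟨u, u', huu', hx, hy⟩ hyz'⟩

variable {td} {k : ℕ} {γ δ : V → Fin k}

theorem Coherent.eq_of_reflTransGen (hγ : td.Coherent Set.univ γ) {x y : V}
    (h : Relation.ReflTransGen td.Parent x y) : γ x = γ y := by
  induction h with
  | refl => rfl
  | tail _ hp ih => exact ih.trans (hγ.1 trivial trivial hp)

theorem Coherent.eq_of_eq (htd : td.IsComplete ℓ) (hγ : td.Coherent Set.univ γ)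
    (hδ : td.Coherent Set.univ δ) {x y : V} (hxy : γ x = γ y) : δ x = δ y := by
  obtain ⟨v, hv⟩ := td.mem_bag y
  obtain ⟨z, hz, hxz⟩ := td.exists_mem_bag_reflTransGen_parent htd x v
  obtain rfl : z = y := hγ.2 v y trivial hv z hz ((hγ.eq_of_reflTransGen hxz).symm.trans hxy)
  exact hδ.eq_of_reflTransGen hxz

theorem Coherent.not_surjective (htd : td.IsComplete ℓ) (hk : ℓ + 1 < k)
    (hγ : td.Coherent Set.univ γ) : ¬ Function.Surjective γ := by
  intro hsurj
  obtain ⟨r⟩ := td.isTree.connected.nonempty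
  have hsub : Finset.univ ⊆ (td.bag r).image γ := fun b _ => by
    obtain ⟨x, rfl⟩ := hsurj b
    obtain ⟨z, hz, hxz⟩ := td.exists_mem_bag_reflTransGen_parent htd x r
    exact Finset.mem_image.mpr ⟨z, hz, (hγ.eq_of_reflTransGen hxz).symm⟩
  have := (Finset.card_le_card hsub).trans Finset.card_image_le
  rw [Finset.card_univ, Fintype.card_fin, htd.1 r] at this
  omega

end TreeDecomp

section Recoloring

open Finset

variable {V : Type} {G : SimpleGraph V} {k : ℕ}

theorem Proper.comp {γ : V → Fin k} (hγ : Proper G γ) {σ : Fin k → Fin k}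
    (hσ : σ.Injective) : Proper G (σ ∘ γ) :=
  fun _ _ hxy => hσ.ne (hγ hxy)

theorem Proper.of_forall_eq_or_eq {γ δ γ' : V → Fin k} (hγ : Proper G γ) (hδ : Proper G δ)
    (hcross : ∀ ⦃x y⦄, G.Adj x y → γ x ≠ δ y) (h : ∀ x, γ' x = γ x ∨ γ' x = δ x) :
    Proper G γ' := by
  intro x y hxy
  rcases h x with hx | hx <;> rcases h y with hy | hy <;> rw [hx, hy]
  · exact hγ hxy
  · exact hcross hxy
  · exact (hcross hxy.symm).symm
  · exact hδ hxy

theorem recolorGraph_adj_update [DecidableEq V] {γ : V → Fin k} (hγ : Proper G γ) {v : V}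
    {b : Fin k} (hb : b ≠ γ v) (hγ' : Proper G (Function.update γ v b)) :
    (recolorGraph G k).Adj ⟨γ, hγ⟩ ⟨Function.update γ v b, hγ'⟩ :=
  ⟨v, by simpa using hb.symm, fun w hw => by_contra fun hwv => hw (by simp [hwv])⟩

variable [Fintype V]

theorem filter_swap_comp_ne_subset {γ δ : V → Fin k} (hker : ∀ x y, γ x = γ y ↔ δ x = δ y)
    {w : V} (hw : γ w ≠ δ w) {s : Fin k} (hs : s ∉ Set.range γ) :
    ({u | Equiv.swap (γ w) s (γ u) ≠ δ u} : Finset V) ⊆ ({u | γ u ≠ δ u} : Finset V) :=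
  fun u hu => by
  simp only [mem_filter, mem_univ, true_and] at hu ⊢
  by_cases huw : γ u = γ w
  · rwa [huw, (hker u w).mp huw]
  · rwa [Equiv.swap_apply_of_ne_of_ne huw fun h => hs ⟨u, h⟩] at hu

variable [DecidableEq V]

/-- The vertices can be switched from `γ` to `δ` one at a time, in any order. -/
theorem edist_le_card_ne_of_cross {γ δ : V → Fin k} (hγ : Proper G γ) (hδ : Proper G δ)
    (hcross : ∀ ⦃x y⦄, G.Adj x y → γ x ≠ δ y) :
    (recolorGraph G k).edist ⟨γ, hγ⟩ ⟨δ, hδ⟩ ≤ #{v | γ v ≠ δ v} := by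
  induction hN : #{v | γ v ≠ δ v} generalizing γ with
  | zero =>
    obtain rfl : γ = δ := funext (by simpa using card_eq_zero.mp hN)
    simp
  | succ N ih =>
    obtain ⟨v, hvD⟩ := card_pos.mp (by rw [hN]; omega : 0 < #{v | γ v ≠ δ v})
    have hv : γ v ≠ δ v := (mem_filter.mp hvD).2
    have hmix : ∀ x, Function.update γ v (δ v) x = γ x ∨ Function.update γ v (δ v) x = δ x :=
      fun x => by rcases eq_or_ne x v with rfl | hx <;> simp [*]
    have hγ' := Proper.of_forall_eq_or_eq hγ hδ hcross hmix
    have hcross' : ∀ ⦃x y⦄, G.Adj x y → Function.update γ v (δ v) x ≠ δ y := fun x y hxy => by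
      rcases hmix x with hx | hx <;> rw [hx]
      exacts [hcross hxy, hδ hxy]
    have hN' : #{u | Function.update γ v (δ v) u ≠ δ u} = N := by
      have hD : ({u | Function.update γ v (δ v) u ≠ δ u} : Finset V) =
          ({u | γ u ≠ δ u} : Finset V).erase v := by
        ext u
        rcases eq_or_ne u v with rfl | hu <;> simp [*]
      rw [hD, card_erase_of_mem hvD, hN, Nat.add_sub_cancel]
    calc _ ≤ _ := SimpleGraph.edist_triangle
      _ ≤ 1 + N :=
          add_le_add (edist_eq_one_iff_adj.mpr (recolorGraph_adj_update hγ hv.symm hγ')).le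
            (ih hγ' hcross' hN')
      _ = ↑(N + 1) := by push_cast; ring

theorem edist_swap_comp_le {γ : V → Fin k} (hγ : Proper G γ) {a b : Fin k}
    (hb : b ∉ Set.range γ) :
    (recolorGraph G k).edist ⟨γ, hγ⟩ ⟨Equiv.swap a b ∘ γ, hγ.comp (Equiv.injective _)⟩ ≤
      #{v | γ v = a} := by
  have hb' : ∀ v, γ v ≠ b := fun v h => hb ⟨v, h⟩
  have hfix : ∀ v, γ v ≠ a → Equiv.swap a b (γ v) = γ v := fun v hv =>
    Equiv.swap_apply_of_ne_of_ne hv (hb' v)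
  refine (edist_le_card_ne_of_cross hγ _ fun x y hxy => ?_).trans ?_
  · by_cases hy : γ y = a
    · simpa [hy] using hb' x
    · simpa [hfix y hy] using hγ hxy
  · exact_mod_cast card_le_card fun v hv => by
      simp only [mem_filter, mem_univ, true_and] at hv ⊢
      by_contra h
      exact hv (hfix v h).symm

variable {γ δ : V → Fin k}

theorem filter_swap_comp_ne_subset_sdiff (hker : ∀ x y, γ x = γ y ↔ δ x = δ y) {v : V}
    (hfree : δ v ∉ Set.range γ) :
    ({u | Equiv.swap (γ v) (δ v) (γ u) ≠ δ u} : Finset V) ⊆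
      ({u | γ u ≠ δ u} : Finset V) \ ({u | δ u = δ v} : Finset V) := fun u hu => by
  simp only [mem_sdiff, mem_filter, mem_univ, true_and] at hu ⊢
  have huv : γ u ≠ γ v := fun h => hu (by rw [h, Equiv.swap_apply_left, (hker u v).mp h])
  rw [Equiv.swap_apply_of_ne_of_ne huv fun h => hfree ⟨u, h⟩] at hu
  exact ⟨hu, fun h => huv ((hker u v).mpr h)⟩

theorem exists_perm_edist_le (hγ : Proper G γ) (hker : ∀ x y, γ x = γ y ↔ δ x = δ y)
    (hγs : ¬ Function.Surjective γ) {v : V} (hv : γ v ≠ δ v)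
    (hmax : ∀ w, γ w ≠ δ w → #{u | δ u = δ w} ≤ #{u | δ u = δ v}) :
    ∃ σ : Equiv.Perm (Fin k),
      (recolorGraph G k).edist ⟨γ, hγ⟩ ⟨σ ∘ γ, hγ.comp σ.injective⟩ ≤ 2 * #{u | δ u = δ v} ∧
      ({u | σ (γ u) ≠ δ u} : Finset V) ⊆
        ({u | γ u ≠ δ u} : Finset V) \ ({u | δ u = δ v} : Finset V) := by
  by_cases hfree : δ v ∈ Set.range γ
  swap
  · have hd := edist_swap_comp_le hγ hfree (a := γ v)
    simp only [hker] at hd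
    exact ⟨_, hd.trans (by norm_cast; omega), filter_swap_comp_ne_subset_sdiff hker hfree⟩
  obtain ⟨w, hwv⟩ := hfree
  have hw : γ w ≠ δ w := fun h => hv (((hker w v).mpr (h.symm.trans hwv)).symm.trans hwv)
  obtain ⟨s, hs⟩ := not_forall.mp hγs
  set σ₁ := Equiv.swap (γ w) s
  have hker₁ : ∀ x y, σ₁ (γ x) = σ₁ (γ y) ↔ δ x = δ y := fun x y =>
    σ₁.injective.eq_iff.trans (hker x y)
  have hfree₁ : δ v ∉ Set.range (σ₁ ∘ γ) := by
    rintro ⟨u, hu⟩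
    refine hs ⟨u, ?_⟩
    simpa [σ₁, ← hwv] using congrArg σ₁ hu
  refine ⟨Equiv.swap (σ₁ (γ v)) (δ v) * σ₁, ?_,
    (filter_swap_comp_ne_subset_sdiff hker₁ hfree₁).trans
    (sdiff_subset_sdiff (filter_swap_comp_ne_subset hker hw hs) le_rfl)⟩
  have hd₁ := edist_swap_comp_le hγ hs (a := γ w)
  have hd₂ := edist_swap_comp_le (hγ.comp σ₁.injective) hfree₁ (a := σ₁ (γ v))
  simp only [hker, Function.comp_apply, hker₁] at hd₁ hd₂
  calc _ ≤ _ := SimpleGraph.edist_triangle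
    _ ≤ #{u | δ u = δ w} + #{u | δ u = δ v} := add_le_add hd₁ hd₂
    _ ≤ 2 * #{u | δ u = δ v} := by have := hmax w hw; norm_cast; omega

/-- Recolor the mismatched color classes one at a time, always the largest first; when the
target color of that class is taken, first park the class holding it on a free color. -/
theorem edist_le_two_mul_card_ne (hγ : Proper G γ) (hδ : Proper G δ)
    (hker : ∀ x y, γ x = γ y ↔ δ x = δ y) (hγs : ¬ Function.Surjective γ) :
    (recolorGraph G k).edist ⟨γ, hγ⟩ ⟨δ, hδ⟩ ≤ 2 * #{v | γ v ≠ δ v} := by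
  induction hN : #{v | γ v ≠ δ v} using Nat.strong_induction_on generalizing γ with
  | _ N ih =>
  rcases ({v | γ v ≠ δ v} : Finset V).eq_empty_or_nonempty with hD | hD
  · obtain rfl : γ = δ := funext (by simpa using hD)
    simp
  obtain ⟨v, hvD, hmax⟩ := exists_max_image _ (fun w => #{u | δ u = δ w}) hD
  have hv : γ v ≠ δ v := (mem_filter.mp hvD).2
  obtain ⟨σ, hσ, hsub⟩ := exists_perm_edist_le hγ hker hγs hv
    fun w hw => hmax w (mem_filter.mpr ⟨mem_univ w, hw⟩)
  have hcls : ({u | δ u = δ v} : Finset V) ⊆ ({u | γ u ≠ δ u} : Finset V) := fun u hu => by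
    simp only [mem_filter, mem_univ, true_and] at hu ⊢
    rwa [(hker u v).mpr hu, hu]
  have hclsN : #{u | δ u = δ v} ≤ N := hN ▸ card_le_card hcls
  have hcard := card_le_card hsub
  rw [card_sdiff_of_subset hcls, hN] at hcard
  have hpos : 0 < #{u | δ u = δ v} := card_pos.mpr ⟨v, by simp⟩
  calc _ ≤ _ := SimpleGraph.edist_triangle
    _ ≤ 2 * #{u | δ u = δ v} + 2 * #{u | σ (γ u) ≠ δ u} :=
        add_le_add hσ (ih _ (by omega) (hγ.comp σ.injective)
          (fun x y => σ.injective.eq_iff.trans (hker x y))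
          (fun h => hγs (h.of_comp_left σ.injective)) rfl)
    _ ≤ 2 * N := by
      exact_mod_cast (by omega : 2 * #{u | δ u = δ v} + 2 * #{u | σ (γ u) ≠ δ u} ≤ 2 * N)

end Recoloring

theorem TreeDecomp.Coherent.edist_le_two_mul_card {V ι : Type} [Fintype V] [DecidableEq V]
    {G : SimpleGraph V} {td : TreeDecomp G ι} {ℓ k : ℕ} (htd : td.IsComplete ℓ) (hk : ℓ + 1 < k)
    {γ δ : V → Fin k} (hγ : Proper G γ) (hδ : Proper G δ) (hγc : td.Coherent Set.univ γ)
    (hδc : td.Coherent Set.univ δ) :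
    (recolorGraph G k).edist ⟨γ, hγ⟩ ⟨δ, hδ⟩ ≤ ↑(2 * Fintype.card V) :=
  (edist_le_two_mul_card_ne hγ hδ (fun _ _ => ⟨hγc.eq_of_eq htd hδc, hδc.eq_of_eq htd hγc⟩)
    (hγc.not_surjective htd hk)).trans
      (by exact_mod_cast Nat.mul_le_mul_left 2 (Finset.card_filter_le _ _))

/-- Let `T` be a `tw(G)`-complete tree decomposition and
`k ≥ tw(G) + 2`. If every proper `k`-coloring can be transformed into a
`V`-coherent coloring with at most `f(n)` recolorings, then the `k`-recoloring
diameter of `G` is at most `2·(f(n) + n)`. -/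
theorem coherent_implies_diameter (n k : ℕ) (G : SimpleGraph (Fin n)) (m : ℕ)
    (td : TreeDecomp G (Fin m)) (htd : td.IsComplete (treewidth G))
    (hk : treewidth G + 2 ≤ k) (f : ℕ → ℕ)
    (h : ∀ (α : Fin n → Fin k) (hα : Proper G α),
      ∃ (γ : Fin n → Fin k) (hγ : Proper G γ), td.Coherent Set.univ γ ∧
        (recolorGraph G k).Reachable ⟨α, hα⟩ ⟨γ, hγ⟩ ∧
        (recolorGraph G k).dist ⟨α, hα⟩ ⟨γ, hγ⟩ ≤ f n) :
    (recolorGraph G k).Connected ∧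
      ∀ α β : {c : Fin n → Fin k // Proper G c},
        (recolorGraph G k).dist α β ≤ 2 * (f n + n) := by
  have hbound (α β : {c : Fin n → Fin k // Proper G c}) :
      (recolorGraph G k).edist α β ≤ ↑(2 * (f n + n)) := by
    obtain ⟨γ, hγ, hγc, hαγ, hαγf⟩ := h α.1 α.2
    obtain ⟨δ, hδ, hδc, hβδ, hβδf⟩ := h β.1 β.2
    have hαγ' : (recolorGraph G k).edist α ⟨γ, hγ⟩ ≤ f n := by
      rw [← hαγ.coe_dist_eq_edist]; exact_mod_cast hαγf
    have hδβ' : (recolorGraph G k).edist ⟨δ, hδ⟩ β ≤ f n := by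
      rw [SimpleGraph.edist_comm, ← hβδ.coe_dist_eq_edist]; exact_mod_cast hβδf
    have hγδ := hγc.edist_le_two_mul_card htd (by omega) hγ hδ hδc
    rw [Fintype.card_fin] at hγδ
    calc (recolorGraph G k).edist α β
        ≤ (recolorGraph G k).edist α ⟨γ, hγ⟩ + (recolorGraph G k).edist ⟨γ, hγ⟩ ⟨δ, hδ⟩ +
          (recolorGraph G k).edist ⟨δ, hδ⟩ β :=
          SimpleGraph.edist_triangle.trans (add_le_add SimpleGraph.edist_triangle le_rfl)
      _ ≤ f n + ↑(2 * n) + f n := add_le_add (add_le_add hαγ' hγδ) hδβ'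
      _ = ↑(2 * (f n + n)) := by push_cast; ring
  obtain ⟨c, hc⟩ := td.exists_proper (k := k) fun u => by rw [htd.1 u]; omega
  refine ⟨(SimpleGraph.connected_iff _).mpr ⟨fun α β => ?_, ⟨⟨c, hc⟩⟩⟩,
    fun α β => ENat.toNat_le_of_le_natCast (hbound α β)⟩
  exact SimpleGraph.edist_ne_top_iff_reachable.mp
    (ne_top_of_le_ne_top (ENat.natCast_ne_top _) (hbound α β))
end
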